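/- Let ψ : [0,∞) → ℝ be 1- and 2-alternating, let d ≥ 1, a ≥ 0, and let x₁,…,x_d, R₁,…,R_d be real numbers with 0 ≤ xᵢ ≤ Rᵢ for i = 1,…,d. Then Σ_{A ⊆ {1,…,d}} ψ( a + Σ_{i∈A} (xᵢ − Rᵢ)² + Σ_{j∈Aᶜ} (xⱼ + Rⱼ)² ) ≤ Σ_{A ⊆ {1,…,d}} ψ( a + 3 Σ_{i∈A} Rᵢ² + Σ_{j∈Aᶜ} Rⱼ² ), where Aᶜ = {1,…,d} \ A. -/

import Mathlib

/-!
Grouping the subsets `A` according to whether they contain a fixed index `i` pairs the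
arguments `b + (xᵢ - Rᵢ)²`, `b + (xᵢ + Rᵢ)²` against `b + 3Rᵢ²`, `b + Rᵢ²`, where the base
`b ≥ 0` collects the other coordinates. So the coordinates can be replaced one at a time,
by induction, once the case `d = 1` is known. There, if `(x + R)² ≤ 3R²` both terms on the
left are dominated by monotonicity; otherwise 2-alternation trades the pair
`(x - R)², (x + R)²` for `3R², 2x² - R²`, and `2x² - R² ≤ R²` because `x ≤ R`.
-/

/-- A function `f : [0,∞) → ℝ` (modeled as `ℝ → ℝ`, with all arguments nonnegative)
is `n`-alternating if `∑_{A ⊆ {1,…,n}} (−1)^{|A|} f(s + ∑_{i∈A} sᵢ) ≤ 0`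
for all `s, s₁, …, sₙ ≥ 0`. -/
def NAlternating (n : ℕ) (f : ℝ → ℝ) : Prop :=
  ∀ s : ℝ, 0 ≤ s → ∀ t : Fin n → ℝ, (∀ i, 0 ≤ t i) →
    ∑ A : Finset (Fin n), (-1 : ℝ) ^ A.card * f (s + ∑ i ∈ A, t i) ≤ 0

open Finset

namespace NAlternating

variable {ψ : ℝ → ℝ}

theorem monotoneOn (h : NAlternating 1 ψ) : MonotoneOn ψ (Set.Ici 0) := by
  intro s hs r _ hsr
  have h' := h s hs ![r - s] (by simpa using hsr)
  rw [show (univ : Finset (Finset (Fin 1))) = {∅, {0}} by decide,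
    sum_pair (by decide)] at h'
  simp only [card_empty, pow_zero, sum_empty, add_zero, one_mul, card_singleton, pow_one,
    sum_singleton, Matrix.cons_val_fin_one, neg_mul, add_sub_cancel] at h'
  linarith

theorem submodular (h : NAlternating 2 ψ) {s p q : ℝ} (hs : 0 ≤ s) (hp : s ≤ p)
    (hq : s ≤ q) :
    ψ s + ψ (p + q - s) ≤ ψ p + ψ q := by
  have h' := h s hs ![p - s, q - s] (by simp [Fin.forall_fin_two, hp, hq])
  rw [show (univ : Finset (Finset (Fin 2))) = {∅, {0}, {1}, {0, 1}} by decide,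
    sum_insert (by decide), sum_insert (by decide), sum_pair (by decide)] at h'
  simp only [card_empty, pow_zero, sum_empty, add_zero, one_mul, card_singleton, pow_one,
    sum_singleton, Matrix.cons_val_zero, neg_mul, Matrix.cons_val_one, Matrix.cons_val_fin_one,
    mem_singleton, zero_ne_one, not_false_eq_true, card_insert_of_notMem, Nat.reduceAdd,
    even_two, Even.neg_pow, one_pow, sum_insert, add_sub_cancel] at h'
  rw [show s + (p - s + (q - s)) = p + q - s by ring] at h'
  linarith

end NAlternating

theorem map_sub_sq_add_map_add_sq_le {ψ : ℝ → ℝ} (h1 : NAlternating 1 ψ)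
    (h2 : NAlternating 2 ψ) {x R b : ℝ} (hx : 0 ≤ x) (hxR : x ≤ R) (hb : 0 ≤ b) :
    ψ (b + (x - R) ^ 2) + ψ (b + (x + R) ^ 2) ≤ ψ (b + 3 * R ^ 2) + ψ (b + R ^ 2) := by
  have hmono := h1.monotoneOn
  have hle : (x - R) ^ 2 ≤ R ^ 2 := by nlinarith
  rcases le_or_gt ((x + R) ^ 2) (3 * R ^ 2) with hsmall | hlarge
  · have hminus : ψ (b + (x - R) ^ 2) ≤ ψ (b + R ^ 2) :=
      hmono (Set.mem_Ici.mpr (by positivity)) (Set.mem_Ici.mpr (by positivity)) (by linarith)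
    have hplus : ψ (b + (x + R) ^ 2) ≤ ψ (b + 3 * R ^ 2) :=
      hmono (Set.mem_Ici.mpr (by positivity)) (Set.mem_Ici.mpr (by positivity))
        (by linarith)
    linarith
  · have hsub := h2.submodular (s := b + (x - R) ^ 2) (p := b + 3 * R ^ 2)
      (q := b + (2 * x ^ 2 - R ^ 2)) (by positivity) (by nlinarith) (by nlinarith)
    rw [show b + 3 * R ^ 2 + (b + (2 * x ^ 2 - R ^ 2)) - (b + (x - R) ^ 2)
      = b + (x + R) ^ 2 by ring] at hsub
    have hswap : ψ (b + (2 * x ^ 2 - R ^ 2)) ≤ ψ (b + R ^ 2) :=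
      hmono (Set.mem_Ici.mpr (by nlinarith)) (Set.mem_Ici.mpr (by positivity))
        (by nlinarith)
    linarith

theorem sum_powerset_le_of_forall_pair_le {ι : Type*} [DecidableEq ι] (ψ : ℝ → ℝ)
    (u v u' v' : ι → ℝ) (hu : ∀ i, 0 ≤ u i) (hv : ∀ i, 0 ≤ v i)
    (hu' : ∀ i, 0 ≤ u' i) (hv' : ∀ i, 0 ≤ v' i)
    (hpair : ∀ i b, 0 ≤ b → ψ (b + u i) + ψ (b + v i) ≤ ψ (b + u' i) + ψ (b + v' i))
    (s : Finset ι) {b : ℝ} (hb : 0 ≤ b) :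
    ∑ A ∈ s.powerset, ψ (b + ∑ i ∈ A, u i + ∑ j ∈ s \ A, v j)
      ≤ ∑ A ∈ s.powerset, ψ (b + ∑ i ∈ A, u' i + ∑ j ∈ s \ A, v' j) := by
  induction s using Finset.induction_on generalizing b with
  | empty => simp
  | insert k s hk ih =>
    have hsplit : ∀ (w z : ι → ℝ) (c : ℝ),
        ∑ A ∈ (insert k s).powerset, ψ (c + ∑ i ∈ A, w i + ∑ j ∈ insert k s \ A, z j)
          = ∑ A ∈ s.powerset, ψ ((c + w k) + ∑ i ∈ A, w i + ∑ j ∈ s \ A, z j)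
            + ∑ A ∈ s.powerset, ψ ((c + z k) + ∑ i ∈ A, w i + ∑ j ∈ s \ A, z j) := by
      intro w z c
      rw [sum_powerset_insert hk, add_comm, ← sum_add_distrib, ← sum_add_distrib]
      refine sum_congr rfl fun A hA => ?_
      have hkA : k ∉ A := fun h => hk (mem_powerset.mp hA h)
      rw [insert_sdiff_insert, sdiff_insert_of_notMem hk, insert_sdiff_of_notMem _ hkA,
        sum_insert hkA, sum_insert (notMem_sdiff_of_notMem_left hk)]
      ring_nf
    have hrest : ∀ A ∈ s.powerset, 0 ≤ ∑ i ∈ A, u i + ∑ j ∈ s \ A, v j := fun A _ =>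
      add_nonneg (sum_nonneg fun i _ => hu i) (sum_nonneg fun j _ => hv j)
    calc _ = ∑ A ∈ s.powerset, (ψ ((b + ∑ i ∈ A, u i + ∑ j ∈ s \ A, v j) + u k)
              + ψ ((b + ∑ i ∈ A, u i + ∑ j ∈ s \ A, v j) + v k)) := by
          rw [hsplit, ← sum_add_distrib]
          refine sum_congr rfl fun A _ => by ring_nf
      _ ≤ ∑ A ∈ s.powerset, (ψ ((b + ∑ i ∈ A, u i + ∑ j ∈ s \ A, v j) + u' k)
              + ψ ((b + ∑ i ∈ A, u i + ∑ j ∈ s \ A, v j) + v' k)) :=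
          sum_le_sum fun A hA => hpair k _ (by linarith [hrest A hA])
      _ = ∑ A ∈ s.powerset, ψ ((b + u' k) + ∑ i ∈ A, u i + ∑ j ∈ s \ A, v j)
            + ∑ A ∈ s.powerset, ψ ((b + v' k) + ∑ i ∈ A, u i + ∑ j ∈ s \ A, v j) := by
          rw [← sum_add_distrib]
          refine sum_congr rfl fun A _ => by ring_nf
      _ ≤ _ := by
          rw [hsplit]
          exact add_le_add (ih (by linarith [hu' k])) (ih (by linarith [hv' k]))

theorem stmt_11_general (ψ : ℝ → ℝ) (h1 : NAlternating 1 ψ) (h2 : NAlternating 2 ψ)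
    (d : ℕ) (a : ℝ) (ha : 0 ≤ a)
    (x R : Fin d → ℝ) (hx0 : ∀ i, 0 ≤ x i) (hxR : ∀ i, x i ≤ R i) :
    ∑ A : Finset (Fin d),
        ψ (a + (∑ i ∈ A, (x i - R i) ^ 2) + ∑ j ∈ Aᶜ, (x j + R j) ^ 2)
      ≤ ∑ A : Finset (Fin d),
          ψ (a + 3 * (∑ i ∈ A, R i ^ 2) + ∑ j ∈ Aᶜ, R j ^ 2) := by
  have h := sum_powerset_le_of_forall_pair_le ψ (fun i => (x i - R i) ^ 2)
    (fun i => (x i + R i) ^ 2) (fun i => 3 * R i ^ 2) (fun i => R i ^ 2)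
    (fun _ => by positivity) (fun _ => by positivity) (fun _ => by positivity)
    (fun _ => by positivity)
    (fun i _ hb => map_sub_sq_add_map_add_sq_le h1 h2 (hx0 i) (hxR i) hb) univ ha
  simpa only [powerset_univ, ← compl_eq_univ_sdiff, ← mul_sum] using h

theorem stmt_11 (ψ : ℝ → ℝ) (h1 : NAlternating 1 ψ) (h2 : NAlternating 2 ψ)
    (d : ℕ) (hd : 1 ≤ d) (a : ℝ) (ha : 0 ≤ a)
    (x R : Fin d → ℝ) (hx0 : ∀ i, 0 ≤ x i) (hxR : ∀ i, x i ≤ R i) :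
    ∑ A : Finset (Fin d),
        ψ (a + (∑ i ∈ A, (x i - R i) ^ 2) + ∑ j ∈ Aᶜ, (x j + R j) ^ 2)
      ≤ ∑ A : Finset (Fin d),
          ψ (a + 3 * (∑ i ∈ A, R i ^ 2) + ∑ j ∈ Aᶜ, R j ^ 2) :=
  stmt_11_general ψ h1 h2 d a ha x R hx0 hxR
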